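/- Let T be a cohesive observation table for target M_tgt, M_hyp^e the evidence Mealy automaton constructed from T, and M_hyp the corresponding symbolic hypothesis (so that M_hyp agrees with M_hyp^e on Σ_E⁺). Suppose the oracle returns a counterexample cex ∈ Σ_E⁺ with M_tgt(cex) ≠ M_hyp(cex), all prefixes of cex are added to R, and T' is the resulting cohesive observation table with evidence automaton M'. Then M' has strictly more states than M_hyp^e. -/

import Mathlib

attribute [local instance] Classical.propDecidable

/-- A (deterministic) Mealy automaton over input alphabet `A`, states `Q`,
output alphabet `Γ`, with initial state, transition and output functions. -/
structure Mealy (A Q Γ : Type*) where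
  init : Q
  δt : Q → A → Q
  δo : Q → A → Γ

namespace Mealy

variable {A Q Γ : Type*}

/-- Extended transition function on words. -/
def transStar (M : Mealy A Q Γ) : Q → List A → Q
  | q, [] => q
  | q, a :: w => M.transStar (M.δt q a) w

/-- Extended output function on a nonempty word given as head and tail. -/
def outStar (M : Mealy A Q Γ) : Q → A → List A → Γ
  | q, a, [] => M.δo q a
  | q, a, b :: w => M.outStar (M.δt q a) b w

/-- `M(a·w)`: output of the automaton on the nonempty word `a :: w` from the initial state. -/
def out (M : Mealy A Q Γ) (a : A) (w : List A) : Γ := M.outStar M.init a w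

end Mealy

/-- An observation table `T = (D, S, R, Σ_E, E, f)` for a target Mealy-style output
function `tgt : D⁺ → Γ`, where `f(w, e) = tgt(w·e)`.  `S ∪ R` is prefix-closed,
`Σ_E ∪ E` is suffix-closed, `ε ∈ S`, `Σ_E` is nonempty, and all components are finite. -/
structure ObsTable (D Γ : Type*) where
  S : Set (List D)
  R : Set (List D)
  E : Set (List D)
  sigE : Set D
  tgt : List D → Γ
  S_finite : S.Finite
  R_finite : R.Finite
  E_finite : E.Finite
  sigE_finite : sigE.Finite
  eps_mem : ([] : List D) ∈ S
  sigE_nonempty : sigE.Nonempty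
  prefixClosed : ∀ w ∈ S ∪ R, ∀ v : List D, v <+: w → v ∈ S ∪ R
  suffixClosed : ∀ w, (w ∈ E ∨ ∃ a ∈ sigE, w = [a]) →
    ∀ v : List D, v <:+ w → v ≠ [] → (v ∈ E ∨ ∃ a ∈ sigE, v = [a])

namespace ObsTable

variable {D Γ : Type*} (T : ObsTable D Γ)

/-- The set of column indices `Σ_E ∪ E` (characters of `Σ_E` viewed as length-1 words). -/
def col : Set (List D) := {w | w ∈ T.E ∨ ∃ a ∈ T.sigE, w = [a]}

/-- The table entry `f(w, e) = tgt(w·e)`. -/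
def f (w e : List D) : Γ := T.tgt (w ++ e)

/-- `row(w₁) = row(w₂)`: the rows of `w₁` and `w₂` agree on every column. -/
def rowEq (w₁ w₂ : List D) : Prop := ∀ e ∈ T.col, T.f w₁ e = T.f w₂ e

/-- Closedness: every row of `R` equals some row of `S`. -/
def Closed : Prop := ∀ r ∈ T.R, ∃ s ∈ T.S, T.rowEq s r

/-- Consistency. -/
def Consistent : Prop := ∀ w₁ ∈ T.S ∪ T.R, ∀ w₂ ∈ T.S ∪ T.R, T.rowEq w₁ w₂ →
  ∀ a : D, w₁ ++ [a] ∈ T.S ∪ T.R → w₂ ++ [a] ∈ T.S ∪ T.R →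
    T.rowEq (w₁ ++ [a]) (w₂ ++ [a])

/-- Evidence-closedness: `s·e ∈ S ∪ R` for all `s ∈ S`, `e ∈ Σ_E`. -/
def EvidenceClosed : Prop := ∀ s ∈ T.S, ∀ a ∈ T.sigE, s ++ [a] ∈ T.S ∪ T.R

/-- Output-closedness: `w·a ∈ S ∪ R` implies `a ∈ Σ_E`. -/
def OutputClosed : Prop := ∀ w ∈ T.S ∪ T.R, ∀ a : D, w ++ [a] ∈ T.S ∪ T.R → a ∈ T.sigE

/-- Cohesiveness: closed, consistent, evidence-closed and output-closed. -/
def Cohesive : Prop := T.Closed ∧ T.Consistent ∧ T.EvidenceClosed ∧ T.OutputClosed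

/-- Reducedness: distinct elements of `S` have distinct rows. -/
def Reduced : Prop := ∀ s₁ ∈ T.S, ∀ s₂ ∈ T.S, T.rowEq s₁ s₂ → s₁ = s₂

/-- `row(w)` as a function from columns to outputs. -/
def rowFun (w : List D) : ↥T.col → Γ := fun e => T.f w e.1

/-- The state space of the evidence Mealy automaton: `{row(s) : s ∈ S}`. -/
def EvQ : Type _ := {g : ↥T.col → Γ // g ∈ rowFun T '' T.S}

/-- A representative `s ∈ S` of a state (a row) of the evidence automaton. -/
noncomputable def rep (q : T.EvQ) : List D :=
  Classical.choose (show ∃ x, x ∈ T.S ∧ T.rowFun x = q.1 from q.2)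

/-- The evidence Mealy automaton constructed from `T`: states are the rows of `S`,
the initial state is `row(ε)`, `δt(row(s), a) = row(s·a)` and `δo(row(s), a) = f(s, a)`.
(For a cohesive table these equations hold for the function below; outside that
situation a junk value is returned.) -/
noncomputable def evidence : Mealy D T.EvQ Γ where
  init := ⟨T.rowFun [], Set.mem_image_of_mem _ T.eps_mem⟩
  δt := fun q a =>
    if h : T.rowFun (T.rep q ++ [a]) ∈ rowFun T '' T.S then ⟨_, h⟩ else q
  δo := fun q a => T.tgt (T.rep q ++ [a])

/-- A Mealy automaton `M` is evidence compatible with `T` if `M(s·e) = f(s, e)` for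
all `s ∈ S ∪ R` and `e ∈ Σ_E ∪ E`. -/
def EvidenceCompatible {Q : Type*} (M : Mealy D Q Γ) : Prop :=
  ∀ s ∈ T.S ∪ T.R, ∀ e ∈ T.col, ∀ (a : D) (w : List D),
    s ++ e = a :: w → M.out a w = T.f s e

end ObsTable

/-!
Send a state `row(s)`, `s ∈ S`, of the old evidence automaton to the state `row'(s)` of the new
one. This is well defined and injective, since rows of `T'` restrict to rows of `T`. If `T'` had
no more states, the map would be onto; then every state of `M'` is `row'(s)` for some `s ∈ S`,
and closedness and consistency of `T'` make the map commute with transitions and outputs on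
letters of `Σ_E`, so `M'` and `M_hyp^e` would agree on `Σ_E⁺`. But all prefixes of `cex` lie in
`S' ∪ R'`, so `M'(cex) = M_tgt(cex) ≠ M_hyp(cex) = M_hyp^e(cex)`.
-/

namespace Mealy

variable {A Q Q' Γ : Type*}

theorem outStar_eq_of_simulation {M : Mealy A Q Γ} {M' : Mealy A Q' Γ} {s : Set A}
    {φ : Q → Q'} (hδt : ∀ q, ∀ a ∈ s, φ (M.δt q a) = M'.δt (φ q) a)
    (hδo : ∀ q, ∀ a ∈ s, M'.δo (φ q) a = M.δo q a) (q : Q) {a : A} {w : List A}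
    (ha : a ∈ s) (hw : ∀ b ∈ w, b ∈ s) :
    M'.outStar (φ q) a w = M.outStar q a w := by
  induction w generalizing q a with
  | nil => exact hδo q a ha
  | cons b w ih =>
    simp only [outStar, ← hδt q a ha]
    exact ih _ (hw b List.mem_cons_self) fun c hc => hw c (List.mem_cons_of_mem b hc)

theorem out_eq_of_simulation {M : Mealy A Q Γ} {M' : Mealy A Q' Γ} {s : Set A}
    {φ : Q → Q'} (hinit : φ M.init = M'.init)
    (hδt : ∀ q, ∀ a ∈ s, φ (M.δt q a) = M'.δt (φ q) a)
    (hδo : ∀ q, ∀ a ∈ s, M'.δo (φ q) a = M.δo q a) {a : A} {w : List A}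
    (ha : a ∈ s) (hw : ∀ b ∈ w, b ∈ s) :
    M'.out a w = M.out a w := by
  rw [out, out, ← hinit]
  exact outStar_eq_of_simulation hδt hδo M.init ha hw

end Mealy

namespace ObsTable

variable {D Γ : Type*} (T : ObsTable D Γ)

instance : Finite T.EvQ := (T.S_finite.image T.rowFun).to_subtype

theorem rep_mem (q : T.EvQ) : T.rep q ∈ T.S :=
  (Classical.choose_spec (show ∃ x, x ∈ T.S ∧ T.rowFun x = q.1 from q.2)).1

theorem rowFun_rep (q : T.EvQ) : T.rowFun (T.rep q) = q.1 :=
  (Classical.choose_spec (show ∃ x, x ∈ T.S ∧ T.rowFun x = q.1 from q.2)).2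

variable {T}

theorem rowFun_eq_iff {w₁ w₂ : List D} : T.rowFun w₁ = T.rowFun w₂ ↔ T.rowEq w₁ w₂ :=
  ⟨fun h e he => congrFun h ⟨e, he⟩, fun h => funext fun e => h e.1 e.2⟩

theorem rowFun_mem_image (hcl : T.Closed) {w : List D} (hw : w ∈ T.S ∪ T.R) :
    T.rowFun w ∈ T.rowFun '' T.S := by
  rcases hw with hS | hR
  · exact ⟨w, hS, rfl⟩
  · obtain ⟨s, hs, hrow⟩ := hcl w hR
    exact ⟨s, hs, rowFun_eq_iff.mpr hrow⟩

theorem evidence_δt_val (hcl : T.Closed) {q : T.EvQ} {a : D}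
    (h : T.rep q ++ [a] ∈ T.S ∪ T.R) :
    (T.evidence.δt q a).1 = T.rowFun (T.rep q ++ [a]) :=
  congrArg Subtype.val (dif_pos (rowFun_mem_image hcl h))

theorem evidence_δt_val_of_rowFun_eq (hcoh : T.Cohesive) {q : T.EvQ} {u : List D} {a : D}
    (hq : q.1 = T.rowFun u) (hu : u ∈ T.S ∪ T.R) (hua : u ++ [a] ∈ T.S ∪ T.R) :
    (T.evidence.δt q a).1 = T.rowFun (u ++ [a]) := by
  obtain ⟨hcl, hcons, hev, hout⟩ := hcoh
  have hrep : T.rep q ++ [a] ∈ T.S ∪ T.R := hev _ (T.rep_mem q) a (hout u hu a hua)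
  rw [evidence_δt_val hcl hrep]
  exact rowFun_eq_iff.mpr <| hcons _ (Or.inl (T.rep_mem q)) u hu
    (rowFun_eq_iff.mp ((T.rowFun_rep q).trans hq)) a hrep hua

theorem evidence_δo_of_rowFun_eq {q : T.EvQ} {u : List D} {a : D}
    (hq : q.1 = T.rowFun u) (ha : [a] ∈ T.col) :
    T.evidence.δo q a = T.f u [a] :=
  congrFun ((T.rowFun_rep q).trans hq) ⟨[a], ha⟩

theorem evidence_outStar_eq_tgt (hcoh : T.Cohesive) {q : T.EvQ} {u : List D} {a : D}
    {w : List D} (hq : q.1 = T.rowFun u)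
    (hpre : ∀ v, v <+: u ++ a :: w → v ∈ T.S ∪ T.R) :
    T.evidence.outStar q a w = T.tgt (u ++ a :: w) := by
  have hu : u ∈ T.S ∪ T.R := hpre u (List.prefix_append u _)
  have hua : u ++ [a] ∈ T.S ∪ T.R := hpre _ ⟨w, by simp⟩
  induction w generalizing q u a with
  | nil =>
    have ha : a ∈ T.sigE := hcoh.2.2.2 u hu a hua
    exact evidence_δo_of_rowFun_eq hq (Or.inr ⟨a, ha, rfl⟩)
  | cons b w ih =>
    have hpre' : ∀ v, v <+: (u ++ [a]) ++ b :: w → v ∈ T.S ∪ T.R := by simpa using hpre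
    rw [Mealy.outStar]
    simpa using ih (evidence_δt_val_of_rowFun_eq hcoh hq hu hua) hpre'
      (hpre' _ (List.prefix_append _ _)) (hpre' _ ⟨w, by simp⟩)

theorem evidence_out_eq_tgt (hcoh : T.Cohesive) {a : D} {w : List D}
    (hpre : ∀ v, v <+: a :: w → v ∈ T.S ∪ T.R) :
    T.evidence.out a w = T.tgt (a :: w) :=
  evidence_outStar_eq_tgt (u := []) hcoh rfl hpre

structure Extends (T T' : ObsTable D Γ) : Prop where
  tgt_eq : T'.tgt = T.tgt
  rows_subset : T.S ∪ T.R ⊆ T'.S ∪ T'.R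
  sigE_subset : T.sigE ⊆ T'.sigE
  E_subset : T.E ⊆ T'.E

namespace Extends

variable {T' : ObsTable D Γ} (h : T.Extends T')
include h

theorem col_subset : T.col ⊆ T'.col := by
  rintro e (he | ⟨c, hc, rfl⟩)
  · exact Or.inl (h.E_subset he)
  · exact Or.inr ⟨c, h.sigE_subset hc, rfl⟩

theorem f_eq (w e : List D) : T'.f w e = T.f w e := by
  simp only [f, h.tgt_eq]

theorem rowFun_eq_of_rowFun_eq {w₁ w₂ : List D} (hw : T'.rowFun w₁ = T'.rowFun w₂) :
    T.rowFun w₁ = T.rowFun w₂ := by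
  funext e
  simpa only [rowFun, h.f_eq] using congrFun hw ⟨e.1, h.col_subset e.2⟩

noncomputable def embed (hcl : T'.Closed) (q : T.EvQ) : T'.EvQ :=
  ⟨T'.rowFun (T.rep q), rowFun_mem_image hcl (h.rows_subset (Or.inl (T.rep_mem q)))⟩

theorem embed_injective (hcl : T'.Closed) : Function.Injective (h.embed hcl) := fun q₁ q₂ hq =>
  Subtype.ext <| by
    rw [← T.rowFun_rep q₁, ← T.rowFun_rep q₂]
    exact h.rowFun_eq_of_rowFun_eq (congrArg Subtype.val hq)

theorem embed_val_of_surjective (hcl : T'.Closed) (hsurj : Function.Surjective (h.embed hcl))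
    {q : T.EvQ} {w : List D} (hw : w ∈ T'.S ∪ T'.R) (hq : q.1 = T.rowFun w) :
    (h.embed hcl q).1 = T'.rowFun w := by
  obtain ⟨p, hp⟩ := hsurj ⟨T'.rowFun w, rowFun_mem_image hcl hw⟩
  have hpw : T'.rowFun (T.rep p) = T'.rowFun w := congrArg Subtype.val hp
  obtain rfl : p = q := Subtype.ext <| by
    rw [← T.rowFun_rep p, h.rowFun_eq_of_rowFun_eq hpw, hq]
  exact hpw

theorem evidence_out_eq_of_surjective (hcoh : T.Cohesive) (hcoh' : T'.Cohesive)
    (hsurj : Function.Surjective (h.embed hcoh'.1)) {a : D} {w : List D} (ha : a ∈ T.sigE)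
    (hw : ∀ b ∈ w, b ∈ T.sigE) :
    T'.evidence.out a w = T.evidence.out a w := by
  have hrep {q : T.EvQ} : T.rep q ∈ T'.S ∪ T'.R := h.rows_subset (Or.inl (T.rep_mem q))
  have hrep_append {q : T.EvQ} {b : D} (hb : b ∈ T.sigE) : T.rep q ++ [b] ∈ T.S ∪ T.R :=
    hcoh.2.2.1 _ (T.rep_mem q) b hb
  refine Mealy.out_eq_of_simulation (φ := h.embed hcoh'.1) (s := T.sigE) ?_ ?_ ?_ ha hw
  · exact Subtype.ext (h.embed_val_of_surjective hcoh'.1 hsurj (Or.inl T'.eps_mem) rfl)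
  · intro q b hb
    refine Subtype.ext ?_
    rw [h.embed_val_of_surjective hcoh'.1 hsurj (h.rows_subset (hrep_append hb))
      (evidence_δt_val hcoh.1 (hrep_append hb))]
    exact (evidence_δt_val_of_rowFun_eq hcoh' rfl hrep (h.rows_subset (hrep_append hb))).symm
  · intro q b hb
    rw [evidence_δo_of_rowFun_eq rfl (h.col_subset (Or.inr ⟨b, hb, rfl⟩)), h.f_eq]
    rfl

theorem card_lt_of_evidence_out_ne (hcoh : T.Cohesive) (hcoh' : T'.Cohesive) {a : D}
    {w : List D} (ha : a ∈ T.sigE) (hw : ∀ b ∈ w, b ∈ T.sigE)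
    (hne : T'.evidence.out a w ≠ T.evidence.out a w) :
    Nat.card T.EvQ < Nat.card T'.EvQ := by
  by_contra! hle
  have hbij := (h.embed_injective hcoh'.1).bijective_of_nat_card_le hle
  exact hne (h.evidence_out_eq_of_surjective hcoh hcoh' hbij.2 ha hw)

end Extends

end ObsTable

/-- Progress on counterexamples: let `T` be a cohesive observation table for target
output function `tgt`, `M_hyp` a hypothesis automaton agreeing with the evidence
automaton of `T` on all nonempty words over `Σ_E`, and `cex = a :: w ∈ Σ_E⁺` a
counterexample with `M_tgt(cex) ≠ M_hyp(cex)`.  If `T'` is a cohesive observation table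
(for the same target) extending `T` and containing all prefixes of `cex` in `S' ∪ R'`,
then the evidence automaton of `T'` has strictly more states than that of `T`. -/
theorem stmt16 {D Γ : Type*} (T : ObsTable D Γ) (hcoh : T.Cohesive)
    {QH : Type*} (Mhyp : Mealy D QH Γ)
    (hagree : ∀ (a : D) (w : List D), a ∈ T.sigE → (∀ b ∈ w, b ∈ T.sigE) →
      Mhyp.out a w = T.evidence.out a w)
    (a : D) (w : List D) (ha : a ∈ T.sigE) (hw : ∀ b ∈ w, b ∈ T.sigE)
    (hcex : T.tgt (a :: w) ≠ Mhyp.out a w)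
    (T' : ObsTable D Γ) (hcoh' : T'.Cohesive) (htgt : T'.tgt = T.tgt)
    (hSR : T.S ∪ T.R ⊆ T'.S ∪ T'.R) (hsig : T.sigE ⊆ T'.sigE) (hE : T.E ⊆ T'.E)
    (hpref : ∀ v : List D, v <+: (a :: w) → v ∈ T'.S ∪ T'.R) :
    Nat.card T.EvQ < Nat.card T'.EvQ := by
  have hext : T.Extends T' := ⟨htgt, hSR, hsig, hE⟩
  have hnew : T'.evidence.out a w = T.tgt (a :: w) := by
    rw [ObsTable.evidence_out_eq_tgt hcoh' hpref, htgt]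
  refine hext.card_lt_of_evidence_out_ne hcoh hcoh' ha hw ?_
  rw [hnew, ← hagree a w ha hw]
  exact hcex
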